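/- Let ko_* = ℤ[η, y, w]/(2η, ηy, η³, y² − 4w) with |η| = 1, |y| = 4, |w| = 8, and ku_* = ℤ[u] with |u| = 2, viewed as a ko_*-algebra via η ↦ 0, y ↦ 2u², w ↦ u⁴. Then the graded ring ku_* ⊗_{ko_*} ku_* is isomorphic to ku_*[ũ]/(2ũ² − 2u², ũ⁴ − u⁴) with |ũ| = 2. -/

import Mathlib

open Polynomial

noncomputable section

/-- `ko_* = ℤ[η, y, w]/(2η, ηy, η³, y² − 4w)`, with `η = X 0`, `y = X 1`, `w = X 2`
(of degrees 1, 4, 8). -/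
def koRel : Ideal (MvPolynomial (Fin 3) ℤ) :=
  Ideal.span {2 * MvPolynomial.X 0, MvPolynomial.X 0 * MvPolynomial.X 1,
    MvPolynomial.X 0 ^ 3, MvPolynomial.X 1 ^ 2 - 4 * MvPolynomial.X 2}

/-- The coefficient ring `ko_*` of connective real K-theory. -/
def KoStar : Type := MvPolynomial (Fin 3) ℤ ⧸ koRel

instance : CommRing KoStar := inferInstanceAs (CommRing (MvPolynomial (Fin 3) ℤ ⧸ koRel))

/-- The complexification map `ko_* → ku_* = ℤ[u]`: `η ↦ 0`, `y ↦ 2u²`, `w ↦ u⁴`. -/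
def koToKu : KoStar →+* Polynomial ℤ :=
  Ideal.Quotient.lift koRel
    (MvPolynomial.aeval ![0, 2 * (X : Polynomial ℤ) ^ 2, (X : Polynomial ℤ) ^ 4]).toRingHom
    (by
      intro a ha
      refine (Ideal.span_le.mpr ?_ : koRel ≤ RingHom.ker _) ha
      rintro b hb
      simp only [Set.mem_insert_iff, Set.mem_singleton_iff] at hb
      rcases hb with rfl | rfl | rfl | rfl <;>
        simp [RingHom.mem_ker] <;> ring)

/-- The `ko_*`-algebra structure on `ku_*` given by complexification. -/
instance : Algebra KoStar (Polynomial ℤ) := koToKu.toAlgebra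

/-- `ku_* ⊗_{ko_*} ku_*`. -/
def KuKoKu : Type := TensorProduct KoStar (Polynomial ℤ) (Polynomial ℤ)

instance : CommRing KuKoKu :=
  inferInstanceAs (CommRing (TensorProduct KoStar (Polynomial ℤ) (Polynomial ℤ)))

instance : Algebra (Polynomial ℤ) KuKoKu :=
  inferInstanceAs (Algebra (Polynomial ℤ)
    (TensorProduct KoStar (Polynomial ℤ) (Polynomial ℤ)))

/-- `ku_*[ũ]/(2ũ² − 2u², ũ⁴ − u⁴)`, where the outer variable `X` is `ũ` and `C u` is `u`. -/
def KuTilde : Type :=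
  Polynomial (Polynomial ℤ) ⧸
    Ideal.span {2 * (X : Polynomial (Polynomial ℤ)) ^ 2 - 2 * (C (X : Polynomial ℤ)) ^ 2,
      (X : Polynomial (Polynomial ℤ)) ^ 4 - (C (X : Polynomial ℤ)) ^ 4}

instance : CommRing KuTilde :=
  inferInstanceAs (CommRing (Polynomial (Polynomial ℤ) ⧸
    Ideal.span {2 * (X : Polynomial (Polynomial ℤ)) ^ 2 - 2 * (C (X : Polynomial ℤ)) ^ 2,
      (X : Polynomial (Polynomial ℤ)) ^ 4 - (C (X : Polynomial ℤ)) ^ 4}))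

instance : Algebra (Polynomial ℤ) KuTilde :=
  inferInstanceAs (Algebra (Polynomial ℤ) (Polynomial (Polynomial ℤ) ⧸
    Ideal.span {2 * (X : Polynomial (Polynomial ℤ)) ^ 2 - 2 * (C (X : Polynomial ℤ)) ^ 2,
      (X : Polynomial (Polynomial ℤ)) ^ 4 - (C (X : Polynomial ℤ)) ^ 4}))

/-! `ku_* ⊗_{ko_*} ku_*` is generated over the left copy of `ku_* = ℤ[u]` by `ũ = 1 ⊗ u`, and
the only relations forced on `ũ` are those expressing that the images of the generators
`y ↦ 2u²` and `w ↦ u⁴` of `ko_*` may be moved across the tensor sign (`η ↦ 0` gives nothing).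
So `u ↦ u`, `ũ ↦ ũ` and `u ⊗ 1 ↦ u`, `1 ⊗ u ↦ ũ` define mutually inverse algebra maps. -/

open scoped TensorProduct

lemma koToKu_mk_X (i : Fin 3) :
    koToKu (Ideal.Quotient.mk koRel (MvPolynomial.X i)) =
      ![0, 2 * (X : Polynomial ℤ) ^ 2, X ^ 4] i :=
  (Ideal.Quotient.lift_mk koRel _ _).trans (MvPolynomial.aeval_X _ i)

lemma ringHom_comp_koToKu_ext {S : Type*} [Ring S] {f g : Polynomial ℤ →+* S}
    (hy : f (2 * X ^ 2) = g (2 * X ^ 2)) (hw : f (X ^ 4) = g (X ^ 4)) :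
    f.comp koToKu = g.comp koToKu := by
  refine Ideal.Quotient.ringHom_ext (MvPolynomial.ringHom_ext' (RingHom.ext_int _ _) fun i => ?_)
  show f (koToKu _) = g (koToKu _)
  rw [koToKu_mk_X]
  fin_cases i
  · simp
  · exact hy
  · exact hw

namespace KuTilde

def rel : Ideal (Polynomial (Polynomial ℤ)) :=
  Ideal.span {2 * (X : Polynomial (Polynomial ℤ)) ^ 2 - 2 * (C (X : Polynomial ℤ)) ^ 2,
    (X : Polynomial (Polynomial ℤ)) ^ 4 - (C (X : Polynomial ℤ)) ^ 4}

def mk : Polynomial (Polynomial ℤ) →ₐ[Polynomial ℤ] KuTilde :=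
  Ideal.Quotient.mkₐ (Polynomial ℤ) rel

def uTilde : KuTilde := mk X

lemma two_mul_uTilde_sq : 2 * uTilde ^ 2 = algebraMap (Polynomial ℤ) KuTilde (2 * X ^ 2) := by
  show mk (2 * X ^ 2) = mk (C (2 * X ^ 2))
  refine Ideal.Quotient.eq.mpr (Ideal.subset_span ?_)
  rw [C_mul, C_pow, map_ofNat C 2]
  exact Set.mem_insert _ _

lemma uTilde_pow_four : uTilde ^ 4 = algebraMap (Polynomial ℤ) KuTilde (X ^ 4) := by
  show mk (X ^ 4) = mk (C (X ^ 4))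
  refine Ideal.Quotient.eq.mpr (Ideal.subset_span ?_)
  rw [C_pow]
  exact Set.mem_insert_of_mem _ rfl

instance : Algebra KoStar KuTilde :=
  ((algebraMap (Polynomial ℤ) KuTilde).comp koToKu).toAlgebra

instance : IsScalarTower KoStar (Polynomial ℤ) KuTilde :=
  IsScalarTower.of_algebraMap_eq fun _ => rfl

def inclRight : Polynomial ℤ →ₐ[KoStar] KuTilde where
  toRingHom := eval₂RingHom (Int.castRingHom KuTilde) uTilde
  commutes' r := RingHom.congr_fun
    (ringHom_comp_koToKu_ext (f := eval₂RingHom (Int.castRingHom KuTilde) uTilde)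
      (g := algebraMap (Polynomial ℤ) KuTilde) (by simpa using two_mul_uTilde_sq)
      (by simpa using uTilde_pow_four)) r

lemma inclRight_X : inclRight X = uTilde := eval₂_X (Int.castRingHom KuTilde) uTilde

end KuTilde

namespace KuKoKu

open KuTilde

def toKuTilde : KuKoKu →ₐ[Polynomial ℤ] KuTilde :=
  Algebra.TensorProduct.productLeftAlgHom (Algebra.ofId _ _) inclRight

def uRight : KuKoKu := (1 : Polynomial ℤ) ⊗ₜ[KoStar] (X : Polynomial ℤ)

lemma one_tmul_koToKu (r : KoStar) :
    ((1 : Polynomial ℤ) ⊗ₜ[KoStar] koToKu r : KuKoKu) =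
      algebraMap (Polynomial ℤ) KuKoKu (koToKu r) :=
  (Algebra.TensorProduct.tmul_one_eq_one_tmul r).symm

lemma two_mul_uRight_sq : 2 * uRight ^ 2 = algebraMap (Polynomial ℤ) KuKoKu (2 * X ^ 2) := by
  have h := one_tmul_koToKu (Ideal.Quotient.mk koRel (MvPolynomial.X 1))
  rw [koToKu_mk_X] at h
  refine Eq.trans ?_ h
  show _ = Algebra.TensorProduct.includeRight (2 * X ^ 2)
  rw [map_mul, map_pow, map_ofNat]
  rfl

lemma uRight_pow_four : uRight ^ 4 = algebraMap (Polynomial ℤ) KuKoKu (X ^ 4) := by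
  have h := one_tmul_koToKu (Ideal.Quotient.mk koRel (MvPolynomial.X 2))
  rw [koToKu_mk_X] at h
  refine Eq.trans ?_ h
  show _ = Algebra.TensorProduct.includeRight (X ^ 4)
  rw [map_pow]
  rfl

def ofKuTilde : KuTilde →ₐ[Polynomial ℤ] KuKoKu :=
  Ideal.Quotient.liftₐ rel (aeval uRight) fun a ha => by
    refine (Ideal.span_le.mpr ?_ : rel ≤ RingHom.ker (aeval uRight)) ha
    rintro _ (rfl | rfl)
    · show aeval uRight _ = 0
      rw [map_sub, map_mul, map_mul, map_pow, map_pow, aeval_X, aeval_C, map_ofNat, sub_eq_zero,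
        two_mul_uRight_sq, map_mul, map_pow, map_ofNat]
    · simp [uRight_pow_four]

lemma toKuTilde_uRight : toKuTilde uRight = uTilde := by
  show algebraMap (Polynomial ℤ) KuTilde 1 * inclRight X = uTilde
  rw [map_one, one_mul, inclRight_X]

lemma ofKuTilde_uTilde : ofKuTilde uTilde = uRight :=
  (Ideal.Quotient.liftₐ_apply _ _ _ _).trans (aeval_X _)

lemma toKuTilde_comp_ofKuTilde : toKuTilde.comp ofKuTilde = AlgHom.id _ _ :=
  Ideal.Quotient.algHom_ext _ <| Polynomial.algHom_ext <|
    (congrArg toKuTilde ofKuTilde_uTilde).trans toKuTilde_uRight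

lemma ofKuTilde_inclRight (q : Polynomial ℤ) :
    ofKuTilde (inclRight q) = ((1 : Polynomial ℤ) ⊗ₜ[KoStar] q : KuKoKu) :=
  RingHom.congr_fun (Polynomial.ringHom_ext' (f := ofKuTilde.toRingHom.comp inclRight.toRingHom)
    (g := Algebra.TensorProduct.includeRight.toRingHom) (RingHom.ext_int _ _)
    ((congrArg ofKuTilde inclRight_X).trans ofKuTilde_uTilde)) q

lemma ofKuTilde_comp_toKuTilde : ofKuTilde.comp toKuTilde = AlgHom.id _ _ := by
  ext x
  induction x using TensorProduct.induction_on with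
  | zero => exact map_zero (ofKuTilde.comp toKuTilde)
  | tmul p q =>
    show ofKuTilde (algebraMap _ _ p * inclRight q) = p ⊗ₜ[KoStar] q
    rw [map_mul, AlgHom.commutes, ofKuTilde_inclRight]
    exact (Algebra.TensorProduct.tmul_mul_tmul p 1 1 q).trans (by rw [mul_one, one_mul])
  | add x y hx hy => exact (map_add (ofKuTilde.comp toKuTilde) x y).trans (congrArg₂ (· + ·) hx hy)

end KuKoKu

/-- As a (graded) commutative augmented `ku_*`-algebra,
`ku_* ⊗_{ko_*} ku_* ≅ ku_*[ũ]/(2ũ² − 2u², ũ⁴ − u⁴)` with `|ũ| = 2`. -/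
theorem stmt_5 : Nonempty (KuKoKu ≃ₐ[Polynomial ℤ] KuTilde) :=
  ⟨AlgEquiv.ofAlgHom KuKoKu.toKuTilde KuKoKu.ofKuTilde KuKoKu.toKuTilde_comp_ofKuTilde
    KuKoKu.ofKuTilde_comp_toKuTilde⟩

end
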